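/- arXiv:2210.04360 — 2 statements merged into one kernel-verified Lean document; each statement's English description precedes it below -/
import Mathlib

section
/- Let A be a Bernoulli(π) random variable, X a random vector independent of A with E(X)=0, and Y square-integrable. Let (α,β,γ,δ) minimize E[(Y − α − βA − γᵀX − A δᵀX)²] over a constrained set where γ ∈ Γ and δ ∈ Δ, with Γ and Δ products of copies of ℝ and singletons. Then β = E(Y|A=1) − E(Y|A=0). That is, the treatment coefficient equals the average treatment effect regardless of which coordinates of γ and δ are fixed. -/
open MeasureTheory ProbabilityTheory

/-! The first-order conditions in the two unconstrained parameters already determine `β`: the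
residual is orthogonal to `1` and to `A`. Since `X` is centred and independent of `A`, and
`A² = A`, the covariate terms `γᵀX` and `A δᵀX` are orthogonal to `1` and `A` as well, so these
conditions read `E[Y] = α + βπ` and `E[YA] = (α + β)π`, whose solution is
`β = E[YA]/π - E[Y(1 - A)]/(1 - π)`. -/

section LeastSquares

variable {Ω : Type*} [MeasurableSpace Ω] {μ : Measure Ω} {f g : Ω → ℝ}

lemma integral_sub_mul_sq (hf : MemLp f 2 μ) (hg : MemLp g 2 μ) (t : ℝ) :
    ∫ ω, (f ω - t * g ω) ^ 2 ∂μ =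
      ∫ ω, f ω ^ 2 ∂μ - 2 * t * ∫ ω, f ω * g ω ∂μ + t ^ 2 * ∫ ω, g ω ^ 2 ∂μ := by
  have hfg : Integrable (fun ω => f ω * g ω) μ := hf.integrable_mul hg
  calc ∫ ω, (f ω - t * g ω) ^ 2 ∂μ
      = ∫ ω, (f ω ^ 2 - 2 * t * (f ω * g ω) + t ^ 2 * g ω ^ 2) ∂μ :=
        integral_congr_ae (ae_of_all _ fun ω => by ring)
    _ = _ := by
      rw [integral_add, integral_sub, integral_const_mul, integral_const_mul]
      exacts [hf.integrable_sq, hfg.const_mul _, hf.integrable_sq.sub (hfg.const_mul _),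
        hg.integrable_sq.const_mul _]

theorem integral_mul_eq_zero_of_forall_integral_sq_le (hf : MemLp f 2 μ) (hg : MemLp g 2 μ)
    (h : ∀ t : ℝ, ∫ ω, f ω ^ 2 ∂μ ≤ ∫ ω, (f ω - t * g ω) ^ 2 ∂μ) :
    ∫ ω, f ω * g ω ∂μ = 0 := by
  have hquad : ∀ t : ℝ,
      0 ≤ (∫ ω, g ω ^ 2 ∂μ) * (t * t) + (-2 * ∫ ω, f ω * g ω ∂μ) * t + 0 := fun t => by
    have := h t
    rw [integral_sub_mul_sq hf hg] at this
    linarith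
  have hdiscr := discrim_le_zero hquad
  rw [discrim] at hdiscr
  nlinarith [sq_nonneg (∫ ω, f ω * g ω ∂μ)]

end LeastSquares

section LinearForm

variable {Ω ι : Type*} [MeasurableSpace Ω] {μ : Measure Ω} [Fintype ι] {X : Ω → ι → ℝ}

lemma memLp_sum_mul (hX : ∀ j, MemLp (fun ω => X ω j) 2 μ) (c : ι → ℝ) :
    MemLp (fun ω => ∑ j, c j * X ω j) 2 μ :=
  memLp_finsetSum _ fun j _ => (hX j).const_mul (c j)

lemma integral_sum_mul_eq_zero (hX : ∀ j, Integrable (fun ω => X ω j) μ)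
    (hXmean : ∀ j, ∫ ω, X ω j ∂μ = 0) (c : ι → ℝ) :
    ∫ ω, ∑ j, c j * X ω j ∂μ = 0 := by
  rw [integral_finsetSum _ fun j _ => (hX j).const_mul (c j)]
  simp [integral_const_mul, hXmean]

lemma ProbabilityTheory.IndepFun.integral_mul_sum_mul_eq_zero {A : Ω → ℝ}
    (hindep : IndepFun A X μ) (hA : AEStronglyMeasurable A μ)
    (hX : ∀ j, Integrable (fun ω => X ω j) μ) (hXmean : ∀ j, ∫ ω, X ω j ∂μ = 0) (c : ι → ℝ) :
    ∫ ω, A ω * ∑ j, c j * X ω j ∂μ = 0 := by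
  have hindep' : IndepFun A (fun ω => ∑ j, c j * X ω j) μ :=
    hindep.comp (ψ := fun v : ι → ℝ => ∑ j, c j * v j) measurable_id (by fun_prop)
  rw [hindep'.integral_fun_mul_eq_mul_integral hA
    (integrable_finsetSum _ fun j _ => (hX j).const_mul (c j)).aestronglyMeasurable,
    integral_sum_mul_eq_zero hX hXmean, mul_zero]

end LinearForm

section Treatment

variable {Ω : Type*} [MeasurableSpace Ω] {μ : Measure Ω} {A Y : Ω → ℝ} {π α β : ℝ}

lemma memLp_top_of_forall_eq_zero_or_eq_one (hA : AEStronglyMeasurable A μ)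
    (hA01 : ∀ ω, A ω = 0 ∨ A ω = 1) : MemLp A ⊤ μ :=
  memLp_top_of_bound hA 1 (ae_of_all _ fun ω => by rcases hA01 ω with h | h <;> simp [h])

lemma eq_div_sub_div_of_integral_eq (hπ0 : 0 < π) (hπ1 : π < 1) (hY : Integrable Y μ)
    (hYA : Integrable (fun ω => Y ω * A ω) μ) (hEY : ∫ ω, Y ω ∂μ = α + β * π)
    (hEYA : ∫ ω, Y ω * A ω ∂μ = (α + β) * π) :
    β = (∫ ω, Y ω * A ω ∂μ) / π - (∫ ω, Y ω * (1 - A ω) ∂μ) / (1 - π) := by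
  have hYc : ∫ ω, Y ω * (1 - A ω) ∂μ = ∫ ω, Y ω ∂μ - ∫ ω, Y ω * A ω ∂μ := by
    simp only [mul_one_sub]
    exact integral_sub hY hYA
  rw [hYc, hEY, hEYA]
  field_simp [hπ0.ne', (sub_pos.2 hπ1).ne']
  ring

theorem eq_div_sub_div_of_forall_integral_sq_le [IsProbabilityMeasure μ] {G D : Ω → ℝ}
    (hπ0 : 0 < π) (hπ1 : π < 1) (hA01 : ∀ ω, A ω = 0 ∨ A ω = 1) (hAmean : ∫ ω, A ω ∂μ = π)
    (hA : MemLp A ⊤ μ) (hY : MemLp Y 2 μ) (hG : MemLp G 2 μ) (hD : MemLp D 2 μ)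
    (hG0 : ∫ ω, G ω ∂μ = 0) (hAG : ∫ ω, A ω * G ω ∂μ = 0) (hAD : ∫ ω, A ω * D ω ∂μ = 0)
    (hα : ∀ t : ℝ, ∫ ω, (Y ω - α - β * A ω - G ω - A ω * D ω) ^ 2 ∂μ ≤
      ∫ ω, (Y ω - α - β * A ω - G ω - A ω * D ω - t * 1) ^ 2 ∂μ)
    (hβ : ∀ t : ℝ, ∫ ω, (Y ω - α - β * A ω - G ω - A ω * D ω) ^ 2 ∂μ ≤
      ∫ ω, (Y ω - α - β * A ω - G ω - A ω * D ω - t * A ω) ^ 2 ∂μ) :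
    β = (∫ ω, Y ω * A ω ∂μ) / π - (∫ ω, Y ω * (1 - A ω) ∂μ) / (1 - π) := by
  have hA2 : MemLp A 2 μ := hA.mono_exponent le_top
  have hAD2 : MemLp (fun ω => A ω * D ω) 2 μ := hD.mul' hA
  have hR : MemLp (fun ω => Y ω - α - β * A ω - G ω - A ω * D ω) 2 μ :=
    (((hY.sub (memLp_const α)).sub (hA2.const_mul β)).sub hG).sub hAD2
  have hR1 := integral_mul_eq_zero_of_forall_integral_sq_le hR (memLp_const (1 : ℝ)) hα
  have hRA := integral_mul_eq_zero_of_forall_integral_sq_le hR hA2 hβ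
  have hAint : Integrable A μ := hA2.integrable one_le_two
  have hYint : Integrable Y μ := hY.integrable one_le_two
  have hGint : Integrable G μ := hG.integrable one_le_two
  have hADint : Integrable (fun ω => A ω * D ω) μ := hAD2.integrable one_le_two
  have hYA : Integrable (fun ω => Y ω * A ω) μ := hY.integrable_mul hA2
  have hAGint : Integrable (fun ω => A ω * G ω) μ := hA2.integrable_mul hG
  refine eq_div_sub_div_of_integral_eq (α := α) hπ0 hπ1 hYint hYA ?_ ?_
  · simp only [mul_one] at hR1
    rw [integral_sub (by fun_prop) hADint, integral_sub (by fun_prop) hGint,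
      integral_sub (by fun_prop) (by fun_prop), integral_sub hYint (by fun_prop), integral_const,
      integral_const_mul, hAmean, hG0, hAD] at hR1
    simp only [probReal_univ, smul_eq_mul, one_mul] at hR1
    linarith
  · have hAA ω : A ω * A ω = A ω := by rcases hA01 ω with h | h <;> simp [h]
    have hmulA ω : (Y ω - α - β * A ω - G ω - A ω * D ω) * A ω =
        Y ω * A ω - (α + β) * A ω - A ω * G ω - A ω * D ω := by
      linear_combination (-(β + D ω)) * hAA ω
    simp only [hmulA] at hRA
    rw [integral_sub (by fun_prop) hADint, integral_sub (by fun_prop) hAGint,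
      integral_sub hYA (by fun_prop), integral_const_mul, hAmean, hAG, hAD] at hRA
    linarith

end Treatment

theorem stmt_1_general {Ω : Type*} [MeasurableSpace Ω] (μ : Measure Ω) [IsProbabilityMeasure μ]
    {p : ℕ} (π : ℝ) (hπ0 : 0 < π) (hπ1 : π < 1)
    (A Y : Ω → ℝ) (X : Ω → Fin p → ℝ)
    (hA01 : ∀ ω, A ω = 0 ∨ A ω = 1)
    (hAmean : ∫ ω, A ω ∂μ = π)
    (hindep : IndepFun A X μ)
    (hXmean : ∀ j, ∫ ω, X ω j ∂μ = 0)
    (hY : MemLp Y 2 μ) (hX : ∀ j, MemLp (fun ω => X ω j) 2 μ)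
    (Γ Δ : Fin p → Set ℝ)
    (α β : ℝ) (γ δ : Fin p → ℝ)
    (hγmem : ∀ j, γ j ∈ Γ j) (hδmem : ∀ j, δ j ∈ Δ j)
    (hmin : ∀ (α' β' : ℝ) (γ' δ' : Fin p → ℝ), (∀ j, γ' j ∈ Γ j) → (∀ j, δ' j ∈ Δ j) →
      ∫ ω, (Y ω - α - β * A ω - (∑ j, γ j * X ω j) - A ω * ∑ j, δ j * X ω j) ^ 2 ∂μ ≤
      ∫ ω, (Y ω - α' - β' * A ω - (∑ j, γ' j * X ω j) - A ω * ∑ j, δ' j * X ω j) ^ 2 ∂μ) :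
    β = (∫ ω, Y ω * A ω ∂μ) / π - (∫ ω, Y ω * (1 - A ω) ∂μ) / (1 - π) := by
  have hAint : Integrable A μ := .of_integral_ne_zero (hAmean ▸ hπ0.ne')
  have hXint j : Integrable (fun ω => X ω j) μ := (hX j).integrable one_le_two
  refine eq_div_sub_div_of_forall_integral_sq_le (α := α) hπ0 hπ1 hA01 hAmean
    (memLp_top_of_forall_eq_zero_or_eq_one hAint.aestronglyMeasurable hA01) hY
    (memLp_sum_mul hX γ) (memLp_sum_mul hX δ) (integral_sum_mul_eq_zero hXint hXmean γ)
    (hindep.integral_mul_sum_mul_eq_zero hAint.aestronglyMeasurable hXint hXmean γ)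
    (hindep.integral_mul_sum_mul_eq_zero hAint.aestronglyMeasurable hXint hXmean δ)
    (fun t => ?_) (fun t => ?_)
  · exact (hmin (α + t) β γ δ hγmem hδmem).trans_eq
      (integral_congr_ae (ae_of_all _ fun ω => by ring))
  · exact (hmin α (β + t) γ δ hγmem hδmem).trans_eq
      (integral_congr_ae (ae_of_all _ fun ω => by ring))

/-- With a Bernoulli(π) treatment `A` independent of mean-zero covariates `X`,
the treatment coefficient `β` of a *constrained* population least squares fit of `Y` on
`(1, A, X, A·X)` — where each coordinate of `γ` (resp. `δ`) is constrained to lie in `Γ j`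
(resp. `Δ j`), each of which is either all of ℝ or a singleton, while `α, β` are
unconstrained — equals the average treatment effect `E(Y|A=1) - E(Y|A=0)`. -/
theorem stmt_1 {Ω : Type*} [MeasurableSpace Ω] (μ : Measure Ω) [IsProbabilityMeasure μ]
    {p : ℕ} (π : ℝ) (hπ0 : 0 < π) (hπ1 : π < 1)
    (A Y : Ω → ℝ) (X : Ω → Fin p → ℝ)
    (hA01 : ∀ ω, A ω = 0 ∨ A ω = 1)
    (hAmean : ∫ ω, A ω ∂μ = π)
    (hindep : IndepFun A X μ)
    (hXmean : ∀ j, ∫ ω, X ω j ∂μ = 0)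
    (hY : MemLp Y 2 μ) (hX : ∀ j, MemLp (fun ω => X ω j) 2 μ)
    (Γ Δ : Fin p → Set ℝ)
    (hΓ : ∀ j, Γ j = Set.univ ∨ ∃ c, Γ j = {c})
    (hΔ : ∀ j, Δ j = Set.univ ∨ ∃ c, Δ j = {c})
    (α β : ℝ) (γ δ : Fin p → ℝ)
    (hγmem : ∀ j, γ j ∈ Γ j) (hδmem : ∀ j, δ j ∈ Δ j)
    (hmin : ∀ (α' β' : ℝ) (γ' δ' : Fin p → ℝ), (∀ j, γ' j ∈ Γ j) → (∀ j, δ' j ∈ Δ j) →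
      ∫ ω, (Y ω - α - β * A ω - (∑ j, γ j * X ω j) - A ω * ∑ j, δ j * X ω j) ^ 2 ∂μ ≤
      ∫ ω, (Y ω - α' - β' * A ω - (∑ j, γ' j * X ω j) - A ω * ∑ j, δ' j * X ω j) ^ 2 ∂μ) :
    β = (∫ ω, Y ω * A ω ∂μ) / π - (∫ ω, Y ω * (1 - A ω) ∂μ) / (1 - π) :=
  stmt_1_general μ π hπ0 hπ1 A Y X hA01 hAmean hindep hXmean hY hX Γ Δ α β γ δ hγmem hδmem hmin
end

section
/- Let A be Bernoulli(π) independent of X, E(X)=0, Σ = E(XXᵀ) positive definite. Let (γ_f, δ_f) be the full-model coefficients, and consider the ANCOVA model (γ₁ = γ_f + πδ_f, δ₁ = 0) versus the ANOVA model (γ₂ = 0, δ₂ = 0). Then the scaled variance difference satisfies π²(1−π)²(V₁ − V₂) = π(1−π)(γ_f + πδ_f)ᵀ Σ {(3π−2)δ_f − γ_f}. In particular, if γ_f = (π−1)δ_f with δ_f ≠ 0 and π ≠ 1/2, then V₁ − V₂ = (2π−1)² δ_fᵀΣδ_f /(π(1−π)) · (1/(π(1−π))) > 0, i.e., ANCOVA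 can have strictly larger asymptotic variance than ANOVA. -/
open MeasureTheory ProbabilityTheory Matrix

/-!
Since `ε₁ = ε₂ - γ₁ᵀX`, the difference of the two weighted second moments is
`E[(A - π)² ((γ₁ᵀX)² - 2 γ₁ᵀX ε₂)]`. As `A` takes only the values `0` and `1`, every `φ(A)` equals
`φ 0 + (φ 1 - φ 0) A`; hence the `ε_f`-terms vanish by the orthogonality of `ε_f` to `X` and `AX`,
and by independence the remaining terms factor as `E[φ(A)] · cᵀΣd`, with
`E[(A - π)²] = π(1 - π)` and `E[(A - π)² A] = π(1 - π)²`.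
-/

lemma comp_eq_of_binary {Ω : Type*} {A : Ω → ℝ} (hA01 : ∀ ω, A ω = 0 ∨ A ω = 1) (φ : ℝ → ℝ)
    (ω : Ω) :
    φ (A ω) = φ 0 + (φ 1 - φ 0) * A ω := by
  rcases hA01 ω with h | h <;> simp [h]

section Binary

variable {Ω : Type*} [MeasurableSpace Ω] {μ : Measure Ω} {A : Ω → ℝ}

lemma memLp_binary_mul (hA01 : ∀ ω, A ω = 0 ∨ A ω = 1) (hA : AEStronglyMeasurable A μ)
    {f : Ω → ℝ} {p : ENNReal} (hf : MemLp f p μ) : MemLp (fun ω => A ω * f ω) p μ :=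
  hf.mul' (memLp_top_of_bound hA 1 (ae_of_all _ fun ω => by rcases hA01 ω with h | h <;> simp [h]))

lemma integrable_comp_binary_mul (hA01 : ∀ ω, A ω = 0 ∨ A ω = 1)
    (hA : AEStronglyMeasurable A μ) (φ : ℝ → ℝ) {f : Ω → ℝ} (hf : Integrable f μ) :
    Integrable (fun ω => φ (A ω) * f ω) μ := by
  have hAf := memLp_one_iff_integrable.1 (memLp_binary_mul hA01 hA (memLp_one_iff_integrable.2 hf))
  simp_rw [comp_eq_of_binary hA01 φ, add_mul, mul_assoc]
  exact (hf.const_mul _).add (hAf.const_mul _)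

lemma integral_comp_binary_mul (hA01 : ∀ ω, A ω = 0 ∨ A ω = 1)
    (hA : AEStronglyMeasurable A μ) (φ : ℝ → ℝ) {f : Ω → ℝ} (hf : Integrable f μ) :
    ∫ ω, φ (A ω) * f ω ∂μ = φ 0 * ∫ ω, f ω ∂μ + (φ 1 - φ 0) * ∫ ω, A ω * f ω ∂μ := by
  have hAf := memLp_one_iff_integrable.1 (memLp_binary_mul hA01 hA (memLp_one_iff_integrable.2 hf))
  simp_rw [comp_eq_of_binary hA01 φ, add_mul, mul_assoc]
  rw [integral_add (hf.const_mul _) (hAf.const_mul _), integral_const_mul, integral_const_mul]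

end Binary

section LinearForms

variable {Ω : Type*} [MeasurableSpace Ω] {μ : Measure Ω} {p : ℕ} {X : Ω → Fin p → ℝ}

lemma memLp_dotProduct (hX : ∀ j, MemLp (fun ω => X ω j) 2 μ) (c : Fin p → ℝ) :
    MemLp (fun ω => c ⬝ᵥ X ω) 2 μ :=
  memLp_finsetSum _ fun j _ => (hX j).const_mul (c j)

lemma integral_mul_dotProduct {f : Ω → ℝ} (hfX : ∀ j, Integrable (fun ω => f ω * X ω j) μ)
    (c : Fin p → ℝ) :
    ∫ ω, f ω * (c ⬝ᵥ X ω) ∂μ = c ⬝ᵥ fun j => ∫ ω, f ω * X ω j ∂μ := by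
  have h : ∀ ω, f ω * (c ⬝ᵥ X ω) = ∑ j, c j * (f ω * X ω j) := fun ω => by
    simp only [dotProduct, Finset.mul_sum]
    exact Finset.sum_congr rfl fun j _ => by ring
  simp only [h]
  rw [integral_finsetSum _ fun j _ => (hfX j).const_mul (c j)]
  exact Finset.sum_congr rfl fun j _ => integral_const_mul _ _

lemma integral_dotProduct_mul_dotProduct (hX : ∀ j, MemLp (fun ω => X ω j) 2 μ)
    {S : Matrix (Fin p) (Fin p) ℝ} (hS : ∀ j k, S j k = ∫ ω, X ω j * X ω k ∂μ)
    (c d : Fin p → ℝ) :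
    ∫ ω, (c ⬝ᵥ X ω) * (d ⬝ᵥ X ω) ∂μ = c ⬝ᵥ S *ᵥ d := by
  calc ∫ ω, (c ⬝ᵥ X ω) * (d ⬝ᵥ X ω) ∂μ = ∫ ω, (d ⬝ᵥ X ω) * (c ⬝ᵥ X ω) ∂μ := by
        simp only [mul_comm]
    _ = c ⬝ᵥ fun j => ∫ ω, X ω j * (d ⬝ᵥ X ω) ∂μ := by
        rw [integral_mul_dotProduct fun j => (memLp_dotProduct hX d).integrable_mul (hX j)]
        simp only [mul_comm]
    _ = c ⬝ᵥ S *ᵥ d := by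
        congr 1
        ext j
        rw [integral_mul_dotProduct fun k => (hX j).integrable_mul (hX k), dotProduct_comm]
        simp only [mulVec, ← hS]

end LinearForms

section Treatment

variable {Ω : Type*} [MeasurableSpace Ω] {μ : Measure Ω} {p : ℕ} {A : Ω → ℝ}
  {X : Ω → Fin p → ℝ}

lemma integral_comp_mul_dotProduct_mul_dotProduct (hA01 : ∀ ω, A ω = 0 ∨ A ω = 1)
    (hA : AEStronglyMeasurable A μ) (hindep : IndepFun A X μ)
    (hX : ∀ j, MemLp (fun ω => X ω j) 2 μ)
    {S : Matrix (Fin p) (Fin p) ℝ} (hS : ∀ j k, S j k = ∫ ω, X ω j * X ω k ∂μ)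
    (φ : ℝ → ℝ) (c d : Fin p → ℝ) :
    ∫ ω, φ (A ω) * ((c ⬝ᵥ X ω) * (d ⬝ᵥ X ω)) ∂μ
      = (φ 0 + (φ 1 - φ 0) * ∫ ω, A ω ∂μ) * (c ⬝ᵥ S *ᵥ d) := by
  have hcd : Integrable (fun ω => (c ⬝ᵥ X ω) * (d ⬝ᵥ X ω)) μ :=
    (memLp_dotProduct hX c).integrable_mul (memLp_dotProduct hX d)
  have hq : Measurable fun v : Fin p → ℝ => (c ⬝ᵥ v) * (d ⬝ᵥ v) := by
    simp only [dotProduct]; fun_prop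
  have hAcd : ∫ ω, A ω * ((c ⬝ᵥ X ω) * (d ⬝ᵥ X ω)) ∂μ
      = (∫ ω, A ω ∂μ) * ∫ ω, (c ⬝ᵥ X ω) * (d ⬝ᵥ X ω) ∂μ :=
    (hindep.comp measurable_id hq).integral_fun_mul_eq_mul_integral hA hcd.aestronglyMeasurable
  rw [integral_comp_binary_mul hA01 hA φ hcd, hAcd, integral_dotProduct_mul_dotProduct hX hS]
  ring

lemma integral_comp_mul_mul_dotProduct_eq_zero (hA01 : ∀ ω, A ω = 0 ∨ A ω = 1)
    (hA : AEStronglyMeasurable A μ) (hX : ∀ j, MemLp (fun ω => X ω j) 2 μ)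
    {e : Ω → ℝ} (he : MemLp e 2 μ) (heX : ∀ j, ∫ ω, e ω * X ω j ∂μ = 0)
    (heAX : ∀ j, ∫ ω, e ω * A ω * X ω j ∂μ = 0) (φ : ℝ → ℝ) (c : Fin p → ℝ) :
    ∫ ω, φ (A ω) * (e ω * (c ⬝ᵥ X ω)) ∂μ = 0 := by
  have heA : MemLp (fun ω => e ω * A ω) 2 μ := by
    simpa only [mul_comm] using memLp_binary_mul hA01 hA he
  have h0 : ∫ ω, e ω * (c ⬝ᵥ X ω) ∂μ = 0 := by
    rw [integral_mul_dotProduct fun j => he.integrable_mul (hX j)]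
    simp [heX]
  have h1 : ∫ ω, A ω * (e ω * (c ⬝ᵥ X ω)) ∂μ = 0 := by
    rw [integral_congr_ae (ae_of_all _ fun ω => by ring : (fun ω => A ω * (e ω * (c ⬝ᵥ X ω)))
      =ᵐ[μ] fun ω => e ω * A ω * (c ⬝ᵥ X ω)),
      integral_mul_dotProduct fun j => heA.integrable_mul (hX j)]
    simp [heAX]
  have hec : Integrable (fun ω => e ω * (c ⬝ᵥ X ω)) μ := he.integrable_mul (memLp_dotProduct hX c)
  rw [integral_comp_binary_mul hA01 hA φ hec, h0, h1]
  ring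

theorem integral_sub_dotProduct_sq_sub_integral_sq (hA01 : ∀ ω, A ω = 0 ∨ A ω = 1)
    (hA : AEStronglyMeasurable A μ) {π : ℝ} (hAmean : ∫ ω, A ω ∂μ = π)
    (hindep : IndepFun A X μ) (hX : ∀ j, MemLp (fun ω => X ω j) 2 μ)
    {S : Matrix (Fin p) (Fin p) ℝ} (hS : ∀ j k, S j k = ∫ ω, X ω j * X ω k ∂μ)
    {εf : Ω → ℝ} (hεf : MemLp εf 2 μ) (hfX : ∀ j, ∫ ω, εf ω * X ω j ∂μ = 0)
    (hfAX : ∀ j, ∫ ω, εf ω * A ω * X ω j ∂μ = 0)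
    {γ δ : Fin p → ℝ} {ε : Ω → ℝ} (hε : ∀ ω, ε ω = εf ω + γ ⬝ᵥ X ω + A ω * δ ⬝ᵥ X ω)
    (g : Fin p → ℝ) :
    (∫ ω, (A ω - π) ^ 2 * (ε ω - g ⬝ᵥ X ω) ^ 2 ∂μ) - ∫ ω, (A ω - π) ^ 2 * ε ω ^ 2 ∂μ
      = π * (1 - π) * (g ⬝ᵥ S *ᵥ (g - 2 • γ - (2 * (1 - π)) • δ)) := by
  set φ : ℝ → ℝ := fun a => (a - π) ^ 2
  set ψ : ℝ → ℝ := fun a => (a - π) ^ 2 * a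
  have hε2 : MemLp ε 2 μ := by
    rw [funext hε]
    exact (hεf.add (memLp_dotProduct hX γ)).add (memLp_binary_mul hA01 hA (memLp_dotProduct hX δ))
  have hεg : MemLp (fun ω => ε ω - g ⬝ᵥ X ω) 2 μ := hε2.sub (memLp_dotProduct hX g)
  have hpt : ∀ ω, φ (A ω) * (ε ω - g ⬝ᵥ X ω) ^ 2 - φ (A ω) * ε ω ^ 2
      = φ (A ω) * ((g ⬝ᵥ X ω) * ((g - 2 • γ) ⬝ᵥ X ω))
        - 2 * (φ (A ω) * (εf ω * (g ⬝ᵥ X ω)))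
        - 2 * (ψ (A ω) * ((g ⬝ᵥ X ω) * (δ ⬝ᵥ X ω))) := fun ω => by
    simp only [φ, ψ, hε ω, sub_dotProduct, smul_dotProduct]
    ring
  have hbil : ∀ c d : Fin p → ℝ, Integrable (fun ω => (c ⬝ᵥ X ω) * (d ⬝ᵥ X ω)) μ := fun c d =>
    (memLp_dotProduct hX c).integrable_mul (memLp_dotProduct hX d)
  have hfg : Integrable (fun ω => εf ω * (g ⬝ᵥ X ω)) μ := hεf.integrable_mul (memLp_dotProduct hX g)
  have h1 := integrable_comp_binary_mul hA01 hA φ (hbil g (g - 2 • γ))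
  have h2 := (integrable_comp_binary_mul hA01 hA φ hfg).const_mul 2
  have h3 := (integrable_comp_binary_mul hA01 hA ψ (hbil g δ)).const_mul 2
  rw [← integral_sub (integrable_comp_binary_mul hA01 hA φ hεg.integrable_sq)
      (integrable_comp_binary_mul hA01 hA φ hε2.integrable_sq),
    integral_congr_ae (ae_of_all _ hpt), integral_sub (by exact h1.sub h2) h3, integral_sub h1 h2,
    integral_const_mul, integral_const_mul,
    integral_comp_mul_dotProduct_mul_dotProduct hA01 hA hindep hX hS,
    integral_comp_mul_dotProduct_mul_dotProduct hA01 hA hindep hX hS,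
    integral_comp_mul_mul_dotProduct_eq_zero hA01 hA hX hεf hfX hfAX, hAmean]
  simp only [φ, ψ, mulVec_sub, mulVec_smul, dotProduct_sub, dotProduct_smul, smul_eq_mul]
  ring

end Treatment

theorem stmt_12_general {Ω : Type*} [MeasurableSpace Ω] (μ : Measure Ω) [IsProbabilityMeasure μ]
    {p : ℕ} (π : ℝ) (hπ0 : 0 < π) (hπ1 : π < 1)
    (A : Ω → ℝ) (X : Ω → Fin p → ℝ)
    (hA01 : ∀ ω, A ω = 0 ∨ A ω = 1)
    (hAmean : ∫ ω, A ω ∂μ = π)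
    (hindep : IndepFun A X μ)
    (hXL2 : ∀ j, MemLp (fun ω => X ω j) 2 μ)
    (S : Matrix (Fin p) (Fin p) ℝ)
    (hS : ∀ j k, S j k = ∫ ω, X ω j * X ω k ∂μ) (hSpd : S.PosDef)
    (γf δf γ₁ : Fin p → ℝ) (hγ₁ : γ₁ = γf + π • δf)
    (εf ε₁ ε₂ : Ω → ℝ) (hεfL2 : MemLp εf 2 μ)
    (hfX : ∀ j, ∫ ω, εf ω * X ω j ∂μ = 0)
    (hfAX : ∀ j, ∫ ω, εf ω * A ω * X ω j ∂μ = 0)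
    (hε₂ : ∀ ω, ε₂ ω = εf ω + (∑ j, γf j * X ω j) + A ω * ∑ j, δf j * X ω j)
    (hε₁ : ∀ ω, ε₁ ω = εf ω + (∑ j, (γf j - γ₁ j) * X ω j) + A ω * ∑ j, δf j * X ω j) :
    (∫ ω, (A ω - π) ^ 2 * ε₁ ω ^ 2 ∂μ) - (∫ ω, (A ω - π) ^ 2 * ε₂ ω ^ 2 ∂μ)
      = π * (1 - π) * ((γf + π • δf) ⬝ᵥ (S *ᵥ ((3 * π - 2) • δf - γf))) ∧
    (γf = (π - 1) • δf → δf ≠ 0 → π ≠ 1 / 2 →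
      ((∫ ω, (A ω - π) ^ 2 * ε₁ ω ^ 2 ∂μ) / (π ^ 2 * (1 - π) ^ 2)
          - (∫ ω, (A ω - π) ^ 2 * ε₂ ω ^ 2 ∂μ) / (π ^ 2 * (1 - π) ^ 2)
        = (2 * π - 1) ^ 2 * (δf ⬝ᵥ (S *ᵥ δf)) / (π * (1 - π)) ∧
      (∫ ω, (A ω - π) ^ 2 * ε₂ ω ^ 2 ∂μ) / (π ^ 2 * (1 - π) ^ 2)
        < (∫ ω, (A ω - π) ^ 2 * ε₁ ω ^ 2 ∂μ) / (π ^ 2 * (1 - π) ^ 2))) := by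
  have hA : Integrable A μ := by
    by_contra h
    exact hπ0.ne (by rw [← hAmean, integral_undef h])
  have hε₁₂ : ε₁ = fun ω => ε₂ ω - γ₁ ⬝ᵥ X ω := funext fun ω => by
    simp only [hε₁, hε₂, dotProduct, sub_mul, Finset.sum_sub_distrib]
    ring
  have hdiff : (∫ ω, (A ω - π) ^ 2 * ε₁ ω ^ 2 ∂μ) - (∫ ω, (A ω - π) ^ 2 * ε₂ ω ^ 2 ∂μ)
      = π * (1 - π) * ((γf + π • δf) ⬝ᵥ (S *ᵥ ((3 * π - 2) • δf - γf))) := by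
    rw [hε₁₂, integral_sub_dotProduct_sq_sub_integral_sq hA01 hA.1 hAmean hindep hXL2 hS hεfL2
      hfX hfAX hε₂, hγ₁]
    congr 3
    module
  refine ⟨hdiff, fun hγf hδf hπ2 => ?_⟩
  have hcoef : (2 * π - 1) ^ 2 ≠ 0 := pow_ne_zero 2 fun h => hπ2 (by linarith)
  have hpos : 0 < δf ⬝ᵥ (S *ᵥ δf) := by simpa using hSpd.dotProduct_mulVec_pos hδf
  have hdiff' : (∫ ω, (A ω - π) ^ 2 * ε₁ ω ^ 2 ∂μ) - (∫ ω, (A ω - π) ^ 2 * ε₂ ω ^ 2 ∂μ)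
      = π * (1 - π) * ((2 * π - 1) ^ 2 * (δf ⬝ᵥ (S *ᵥ δf))) := by
    rw [hdiff, hγf, ← add_smul, ← sub_smul, mulVec_smul, dotProduct_smul, smul_dotProduct]
    simp only [smul_eq_mul]
    ring
  have hπ : 0 < π * (1 - π) := mul_pos hπ0 (by linarith)
  constructor
  · rw [div_sub_div_same, hdiff']
    field_simp
  · rw [div_lt_div_iff_of_pos_right (by positivity), ← sub_pos, hdiff']
    positivity

/-- ANCOVA vs ANOVA counterexample: with full-model residual `ε_f`
(orthogonal to `1, A, X, AX`), ANCOVA coefficient `γ₁ = γ_f + π δ_f`, ANOVA residual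
`ε₂ = ε_f + γ_fᵀX + A δ_fᵀX` and ANCOVA residual `ε₁ = ε_f + (γ_f - γ₁)ᵀX + A δ_fᵀX`,
one has `π²(1-π)²(V₁ - V₂) = π(1-π)(γ_f + πδ_f)ᵀΣ{(3π-2)δ_f - γ_f}`; in particular, if
`γ_f = (π-1)δ_f`, `δ_f ≠ 0` and `π ≠ 1/2`, then
`V₁ - V₂ = (2π-1)² δ_fᵀΣδ_f/(π(1-π)) > 0`, i.e. ANCOVA has strictly larger asymptotic
variance than ANOVA. -/
theorem stmt_12 {Ω : Type*} [MeasurableSpace Ω] (μ : Measure Ω) [IsProbabilityMeasure μ]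
    {p : ℕ} (π : ℝ) (hπ0 : 0 < π) (hπ1 : π < 1)
    (A : Ω → ℝ) (X : Ω → Fin p → ℝ)
    (hA01 : ∀ ω, A ω = 0 ∨ A ω = 1)
    (hAmean : ∫ ω, A ω ∂μ = π)
    (hindep : IndepFun A X μ)
    (hXmean : ∀ j, ∫ ω, X ω j ∂μ = 0)
    (hXL2 : ∀ j, MemLp (fun ω => X ω j) 2 μ)
    (S : Matrix (Fin p) (Fin p) ℝ)
    (hS : ∀ j k, S j k = ∫ ω, X ω j * X ω k ∂μ) (hSpd : S.PosDef)
    (γf δf γ₁ : Fin p → ℝ) (hγ₁ : γ₁ = γf + π • δf)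
    (εf ε₁ ε₂ : Ω → ℝ) (hεfL2 : MemLp εf 2 μ)
    (hf0 : ∫ ω, εf ω ∂μ = 0) (hfA : ∫ ω, εf ω * A ω ∂μ = 0)
    (hfX : ∀ j, ∫ ω, εf ω * X ω j ∂μ = 0)
    (hfAX : ∀ j, ∫ ω, εf ω * A ω * X ω j ∂μ = 0)
    (hε₂ : ∀ ω, ε₂ ω = εf ω + (∑ j, γf j * X ω j) + A ω * ∑ j, δf j * X ω j)
    (hε₁ : ∀ ω, ε₁ ω = εf ω + (∑ j, (γf j - γ₁ j) * X ω j) + A ω * ∑ j, δf j * X ω j) :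
    (∫ ω, (A ω - π) ^ 2 * ε₁ ω ^ 2 ∂μ) - (∫ ω, (A ω - π) ^ 2 * ε₂ ω ^ 2 ∂μ)
      = π * (1 - π) * ((γf + π • δf) ⬝ᵥ (S *ᵥ ((3 * π - 2) • δf - γf))) ∧
    (γf = (π - 1) • δf → δf ≠ 0 → π ≠ 1 / 2 →
      ((∫ ω, (A ω - π) ^ 2 * ε₁ ω ^ 2 ∂μ) / (π ^ 2 * (1 - π) ^ 2)
          - (∫ ω, (A ω - π) ^ 2 * ε₂ ω ^ 2 ∂μ) / (π ^ 2 * (1 - π) ^ 2)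
        = (2 * π - 1) ^ 2 * (δf ⬝ᵥ (S *ᵥ δf)) / (π * (1 - π)) ∧
      (∫ ω, (A ω - π) ^ 2 * ε₂ ω ^ 2 ∂μ) / (π ^ 2 * (1 - π) ^ 2)
        < (∫ ω, (A ω - π) ^ 2 * ε₁ ω ^ 2 ∂μ) / (π ^ 2 * (1 - π) ^ 2))) :=
  stmt_12_general μ π hπ0 hπ1 A X hA01 hAmean hindep hXL2 S hS hSpd γf δf γ₁ hγ₁ εf ε₁ ε₂ hεfL2 hfX
    hfAX hε₂ hε₁
end
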